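/- arXiv:0806.4708 — 3 statements merged into one kernel-verified Lean document; each statement's English description precedes it below -/
import Mathlib

section
/- Let V = D ⊕ E as above and let R = aΠ + bΦ + cΨ for real numbers a,b,c, with Π, Φ, Ψ defined as in the previous contexts. Then for every unit vector X ∈ V, R(X,JX,JX,X) = a + b|X_D|² + c|X_D|⁴. -/
open scoped InnerProductSpace

theorem stmt_3 {V : Type*} [NormedAddCommGroup V] [InnerProductSpace ℝ V]
    [FiniteDimensional ℝ V]
    (J : V →ₗ[ℝ] V) (hJ2 : ∀ x, J (J x) = -x)
    (hskew : ∀ x y, ⟪J x, y⟫_ℝ = -⟪x, J y⟫_ℝ)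
    (D : Submodule ℝ V) (hDinv : ∀ x ∈ D, J x ∈ D)
    (h : V → V → ℝ)
    (hh : ∀ X Y, h X Y = ⟪(D.orthogonalProjection X : V), (D.orthogonalProjection Y : V)⟫_ℝ)
    (ω : V → V → ℝ) (hω : ∀ X Y, ω X Y = h (J X) Y)
    (Pi4 : V → V → V → V → ℝ)
    (hPi : ∀ X Y Z U, Pi4 X Y Z U =
      (1/4) * (⟪Y, Z⟫_ℝ * ⟪X, U⟫_ℝ - ⟪X, Z⟫_ℝ * ⟪Y, U⟫_ℝ
        + ⟪J Y, Z⟫_ℝ * ⟪J X, U⟫_ℝ - ⟪J X, Z⟫_ℝ * ⟪J Y, U⟫_ℝ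
        - 2 * ⟪J X, Y⟫_ℝ * ⟪J Z, U⟫_ℝ))
    (Φ : V → V → V → V → ℝ)
    (hΦ : ∀ X Y Z U, Φ X Y Z U =
      (1/8) * (⟪Y, Z⟫_ℝ * h X U - ⟪X, Z⟫_ℝ * h Y U + ⟪X, U⟫_ℝ * h Y Z - ⟪Y, U⟫_ℝ * h X Z
        + ⟪J Y, Z⟫_ℝ * ω X U - ⟪J X, Z⟫_ℝ * ω Y U + ⟪J X, U⟫_ℝ * ω Y Z - ⟪J Y, U⟫_ℝ * ω X Z
        - 2 * ⟪J X, Y⟫_ℝ * ω Z U - 2 * ⟪J Z, U⟫_ℝ * ω X Y))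
    (Ψ : V → V → V → V → ℝ)
    (hΨ : ∀ X Y Z U, Ψ X Y Z U = -(ω X Y * ω Z U))
    (a b c : ℝ)
    (R : V → V → V → V → ℝ)
    (hR : ∀ X Y Z U, R X Y Z U = a * Pi4 X Y Z U + b * Φ X Y Z U + c * Ψ X Y Z U)
    (X : V) (hX : ⟪X, X⟫_ℝ = 1) :
    R X (J X) (J X) X =
      a + b * ⟪(D.orthogonalProjection X : V), (D.orthogonalProjection X : V)⟫_ℝ
        + c * ⟪(D.orthogonalProjection X : V), (D.orthogonalProjection X : V)⟫_ℝ ^ 2 := by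
  have hJJ : ∀ u v : V, ⟪J u, J v⟫_ℝ = ⟪u, v⟫_ℝ := by
    intro u v
    rw [hskew, hJ2, inner_neg_right, neg_neg]
  have hJP : ∀ x : V,
      (D.orthogonalProjection (J x) : V) = J (D.orthogonalProjection x : V) := by
    intro x
    apply Submodule.eq_starProjection_of_mem_of_inner_eq_zero
    · exact hDinv _ (D.orthogonalProjection x).2
    · intro w hw
      have : J x - J (D.orthogonalProjection x : V) = J (x - (D.orthogonalProjection x : V)) := by
        rw [map_sub]
      rw [this, hskew, (by exact Submodule.starProjection_inner_eq_zero x (J w) (hDinv w hw) : ⟪x - (D.orthogonalProjection x : V), J w⟫_ℝ = 0), neg_zero]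
  set P : V := (D.orthogonalProjection X : V) with hP
  have hJX : ⟪J X, X⟫_ℝ = 0 := by
    have := hskew X X
    have h2 : ⟪X, J X⟫_ℝ = ⟪J X, X⟫_ℝ := real_inner_comm _ _
    linarith [hskew X X, h2 ▸ this]
  have hXJ : ⟪X, J X⟫_ℝ = 0 := by rw [real_inner_comm]; exact hJX
  have hJXJX : ⟪J X, J X⟫_ℝ = 1 := by rw [hJJ]; exact hX
  have hJPP : ⟪J P, P⟫_ℝ = 0 := by
    have h1 := hskew P P
    have h2 : ⟪P, J P⟫_ℝ = ⟪J P, P⟫_ℝ := real_inner_comm _ _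
    linarith [h2 ▸ h1]
  have hPJP : ⟪P, J P⟫_ℝ = 0 := by rw [real_inner_comm]; exact hJPP
  have hJPJP : ⟪J P, J P⟫_ℝ = ⟪P, P⟫_ℝ := hJJ P P
  simp only [hR, hPi, hΦ, hΨ, hω, hh, hJ2, hJP, map_neg, ContinuousLinearMap.neg_apply, NegMemClass.coe_neg, inner_neg_left, inner_neg_right,
    ← hP, hX, hJX, hXJ, hJXJX, hJPP, hPJP, hJPJP]
  ring
end

section
/- Let r : ℝ → ℝ be real analytic with r'(0) = 0 and r'(L) = 0, and suppose r satisfies the second-order ODE r'' = (1/2)P'(r) for a polynomial P. Then all odd-order derivatives of r vanish at 0 and at L, i.e., r^{(2k-1)}(0) = r^{(2k-1)}(L) = 0 for all k ≥ 1; consequently r(t) = r(-t + 2·0) near 0 and r(L+t) = r(L-t) near L (r is even at 0 and at L). -/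
open Set Filter Topology

/-- Key lemma: an analytic solution of `r'' = Q(r)` with a critical point at `p`
is even around `p`. -/
lemma even_at_crit (r : ℝ → ℝ) (hr : AnalyticOnNhd ℝ r Set.univ)
    (P : Polynomial ℝ)
    (hode : ∀ t, deriv (deriv r) t = (1 / 2) * (Polynomial.derivative P).eval (r t))
    (p : ℝ) (hp : deriv r p = 0) :
    ∀ᶠ t in 𝓝 (0 : ℝ), r (p + t) = r (p - t) := by
  set QP : Polynomial ℝ := Polynomial.C (1 / 2) * Polynomial.derivative P with hQP
  set Q : ℝ → ℝ := fun x => QP.eval x with hQ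
  have hode' : ∀ t, deriv (deriv r) t = Q (r t) := by
    intro t; simp [hQ, hQP, hode t]
  have hrd : Differentiable ℝ r := fun x => (hr x (mem_univ x)).differentiableAt
  have hrd' : Differentiable ℝ (deriv r) := fun x =>
    ((hr.deriv) x (mem_univ x)).differentiableAt
  -- Lipschitz constant for Q on the closed ball
  obtain ⟨C, hC⟩ := (isCompact_closedBall (r p) 1).exists_bound_of_continuousOn
    (QP.derivative.continuous.continuousOn :
      ContinuousOn (fun x => QP.derivative.eval x) (Metric.closedBall (r p) 1))
  set K' : NNReal := Real.toNNReal C with hK'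
  have hQlip : LipschitzOnWith K' Q (Metric.closedBall (r p) 1) := by
    apply Convex.lipschitzOnWith_of_nnnorm_deriv_le
      (fun x _ => QP.differentiable.differentiableAt)
    · intro x hx
      have hd : deriv Q x = QP.derivative.eval x := by
        simp [hQ, Polynomial.deriv]
      rw [← NNReal.coe_le_coe]
      simp only [coe_nnnorm, hd, hK', Real.coe_toNNReal', le_max_iff]
      left; rw [Polynomial.deriv]; exact hC x hx
    · exact convex_closedBall _ _
  -- the vector field
  set v : ℝ → ℝ × ℝ → ℝ × ℝ := fun _ x => (x.2, Q x.1) with hv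
  set s : ℝ → Set (ℝ × ℝ) := fun _ => Metric.closedBall (r p) 1 ×ˢ (univ : Set ℝ) with hs
  set K : NNReal := max 1 K' with hK
  have hvlip : ∀ t, LipschitzOnWith K (v t) (s t) := by
    intro t
    apply LipschitzOnWith.of_dist_le_mul
    rintro x ⟨hx1, -⟩ y ⟨hy1, -⟩
    rw [Prod.dist_eq]
    have hxy1 : dist x.1 y.1 ≤ dist x y := le_max_left _ _
    have hxy2 : dist x.2 y.2 ≤ dist x y := le_max_right _ _
    apply max_le
    · calc dist x.2 y.2 ≤ 1 * dist x y := by linarith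
        _ ≤ K * dist x y := by
          apply mul_le_mul_of_nonneg_right _ dist_nonneg
          exact_mod_cast le_max_left 1 K'
    · calc dist (Q x.1) (Q y.1) ≤ K' * dist x.1 y.1 := hQlip.dist_le_mul x.1 hx1 y.1 hy1
        _ ≤ K' * dist x y := mul_le_mul_of_nonneg_left hxy1 K'.coe_nonneg
        _ ≤ K * dist x y := by
          apply mul_le_mul_of_nonneg_right _ dist_nonneg
          exact_mod_cast le_max_right 1 K'
  -- choose ε so that both trajectories stay in the ball
  have hcont : ContinuousAt (fun t => (r (p + t), r (p - t))) 0 := by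
    apply ContinuousAt.prodMk
    · exact (hrd.continuous.comp (continuous_const.add continuous_id)).continuousAt
    · exact (hrd.continuous.comp (continuous_const.sub continuous_id)).continuousAt
  have hmem : ∀ᶠ t in 𝓝 (0 : ℝ),
      r (p + t) ∈ Metric.closedBall (r p) 1 ∧ r (p - t) ∈ Metric.closedBall (r p) 1 := by
    have h1 : ContinuousAt (fun t => r (p + t)) 0 :=
      (hrd.continuous.comp (continuous_const.add continuous_id)).continuousAt
    have h2 : ContinuousAt (fun t => r (p - t)) 0 :=
      (hrd.continuous.comp (continuous_const.sub continuous_id)).continuousAt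
    have e1 : ∀ᶠ t in 𝓝 (0:ℝ), r (p + t) ∈ Metric.ball (r p) 1 := by
      apply h1.eventually_mem
      simp
      exact Metric.ball_mem_nhds _ one_pos
    have e2 : ∀ᶠ t in 𝓝 (0:ℝ), r (p - t) ∈ Metric.ball (r p) 1 := by
      apply h2.eventually_mem
      simp
      exact Metric.ball_mem_nhds _ one_pos
    filter_upwards [e1, e2] with t h1 h2
    exact ⟨Metric.ball_subset_closedBall h1, Metric.ball_subset_closedBall h2⟩
  obtain ⟨ε, hε, hball⟩ := Metric.mem_nhds_iff.mp hmem
  have hIoo : Ioo (-ε) ε ⊆ Metric.ball (0 : ℝ) ε := by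
    rw [Real.ball_eq_Ioo]; simp
  -- the two solutions
  set f : ℝ → ℝ × ℝ := fun t => (r (p + t), deriv r (p + t)) with hf
  set g : ℝ → ℝ × ℝ := fun t => (r (p - t), -deriv r (p - t)) with hg
  have hf' : ∀ t ∈ Ioo (-ε) ε, HasDerivAt f (v t (f t)) t ∧ f t ∈ s t := by
    intro t ht
    constructor
    · apply HasDerivAt.prodMk
      · exact ((hrd (p + t)).hasDerivAt).comp_const_add p t
      · have := ((hrd' (p + t)).hasDerivAt).comp_const_add p t
        rwa [hode' (p + t)] at this
    · exact ⟨(hball (hIoo ht)).1, mem_univ _⟩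
  have hg' : ∀ t ∈ Ioo (-ε) ε, HasDerivAt g (v t (g t)) t ∧ g t ∈ s t := by
    intro t ht
    constructor
    · apply HasDerivAt.prodMk
      · exact ((hrd (p - t)).hasDerivAt).comp_const_sub p t
      · have := (((hrd' (p - t)).hasDerivAt).comp_const_sub p t).neg
        rw [hode' (p - t), neg_neg] at this
        exact this
    · exact ⟨(hball (hIoo ht)).2, mem_univ _⟩
  have heq : f 0 = g 0 := by simp [hf, hg, hp]
  have := ODE_solution_unique_of_mem_Ioo (fun t _ => hvlip t) (t₀ := 0) ⟨by linarith, hε⟩ hf' hg' heq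
  have hnhds : Ioo (-ε) ε ∈ 𝓝 (0 : ℝ) := Ioo_mem_nhds (by linarith) hε
  filter_upwards [hnhds] with t ht
  exact congrArg Prod.fst (this ht)

lemma odd_deriv_zero (r : ℝ → ℝ) (p : ℝ) (n : ℕ) (hn : Odd n)
    (hev : ∀ᶠ t in 𝓝 (0 : ℝ), r (p + t) = r (p - t)) :
    iteratedDeriv n r p = 0 := by
  have h1 : iteratedDeriv n (fun t => r (p + t)) 0 = iteratedDeriv n (fun t => r (p - t)) 0 :=
    Filter.EventuallyEq.iteratedDeriv_eq n hev
  have h2 : iteratedDeriv n (fun t => r (p + t)) 0 = iteratedDeriv n r p := by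
    rw [iteratedDeriv_comp_const_add n r p]; simp
  have h3 : iteratedDeriv n (fun t => r (p - t)) 0 = - iteratedDeriv n r p := by
    have : (fun t : ℝ => r (p - t)) = (fun x : ℝ => (fun z => r (p + z)) (-x)) := by
      funext t; rw [sub_eq_add_neg]
    rw [this, iteratedDeriv_comp_neg n (fun z => r (p + z)) 0,
      iteratedDeriv_comp_const_add n r p]
    simp [hn.neg_one_pow]
  rw [h2, h3] at h1
  linarith

theorem stmt_11 (r : ℝ → ℝ) (hr : AnalyticOn ℝ r Set.univ) (L : ℝ)
    (h0 : deriv r 0 = 0) (hL : deriv r L = 0)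
    (P : Polynomial ℝ)
    (hode : ∀ t, deriv (deriv r) t = (1 / 2) * (Polynomial.derivative P).eval (r t)) :
    (∀ k : ℕ, 1 ≤ k → iteratedDeriv (2 * k - 1) r 0 = 0 ∧ iteratedDeriv (2 * k - 1) r L = 0) ∧
    (∀ᶠ t in nhds (0 : ℝ), r t = r (-t)) ∧
    (∀ᶠ t in nhds (0 : ℝ), r (L + t) = r (L - t)) := by
  rw [analyticOn_univ] at hr
  have hev0 := even_at_crit r hr P hode 0 h0
  have hevL := even_at_crit r hr P hode L hL
  refine ⟨?_, ?_, hevL⟩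
  · intro k hk
    have hodd : Odd (2 * k - 1) := by
      obtain ⟨m, rfl⟩ := Nat.exists_eq_add_of_le hk
      exact ⟨m, by omega⟩
    exact ⟨odd_deriv_zero r 0 _ hodd hev0, odd_deriv_zero r L _ hodd hevL⟩
  · filter_upwards [hev0] with t ht
    simpa using ht
end

section
/- Let (V,g,J) be a real inner product space with skew-symmetric complex structure J, and let D ⊂ V be a 2-dimensional J-invariant subspace with orthogonal complement E. For R = aΠ + bΦ + cΨ, the associated Ricci-type contraction ρ(X,Y) = Σᵢ R(eᵢ, X, Y, eᵢ) over an orthonormal basis {eᵢ} of V satisfies ρ = λ·m + μ·h, where m = g∘(p_E × p_E), h = g∘(p_D × p_D), λ = ((n+1)/2)a + b/4 and μ = ((n+1)/2)a + ((n+3)/4)b + c, with dim V = 2n. -/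
open scoped InnerProductSpace

theorem stmt_13 {V : Type*} [NormedAddCommGroup V] [InnerProductSpace ℝ V]
    [FiniteDimensional ℝ V] (n : ℕ) (hn : 1 ≤ n)
    (e : OrthonormalBasis (Fin (2 * n)) ℝ V)
    (J : V →ₗ[ℝ] V) (hJ2 : ∀ x, J (J x) = -x)
    (hskew : ∀ x y, ⟪J x, y⟫_ℝ = -⟪x, J y⟫_ℝ)
    (D : Submodule ℝ V) (hDdim : Module.finrank ℝ D = 2) (hDinv : ∀ x ∈ D, J x ∈ D)
    (h m : V → V → ℝ)
    (hh : ∀ X Y, h X Y = ⟪(Submodule.orthogonalProjectionOnto D X : V), (Submodule.orthogonalProjectionOnto D Y : V)⟫_ℝ)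
    (hm : ∀ X Y, m X Y = ⟪(Submodule.orthogonalProjectionOnto Dᗮ X : V), (Submodule.orthogonalProjectionOnto Dᗮ Y : V)⟫_ℝ)
    (ω : V → V → ℝ) (hω : ∀ X Y, ω X Y = h (J X) Y)
    (Pi4 : V → V → V → V → ℝ)
    (hPi : ∀ X Y Z U, Pi4 X Y Z U =
      (1/4) * (⟪Y, Z⟫_ℝ * ⟪X, U⟫_ℝ - ⟪X, Z⟫_ℝ * ⟪Y, U⟫_ℝ
        + ⟪J Y, Z⟫_ℝ * ⟪J X, U⟫_ℝ - ⟪J X, Z⟫_ℝ * ⟪J Y, U⟫_ℝ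
        - 2 * ⟪J X, Y⟫_ℝ * ⟪J Z, U⟫_ℝ))
    (Φ : V → V → V → V → ℝ)
    (hΦ : ∀ X Y Z U, Φ X Y Z U =
      (1/8) * (⟪Y, Z⟫_ℝ * h X U - ⟪X, Z⟫_ℝ * h Y U + ⟪X, U⟫_ℝ * h Y Z - ⟪Y, U⟫_ℝ * h X Z
        + ⟪J Y, Z⟫_ℝ * ω X U - ⟪J X, Z⟫_ℝ * ω Y U + ⟪J X, U⟫_ℝ * ω Y Z - ⟪J Y, U⟫_ℝ * ω X Z
        - 2 * ⟪J X, Y⟫_ℝ * ω Z U - 2 * ⟪J Z, U⟫_ℝ * ω X Y))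
    (Ψ : V → V → V → V → ℝ)
    (hΨ : ∀ X Y Z U, Ψ X Y Z U = -(ω X Y * ω Z U))
    (a b c : ℝ)
    (R : V → V → V → V → ℝ)
    (hR : ∀ X Y Z U, R X Y Z U = a * Pi4 X Y Z U + b * Φ X Y Z U + c * Ψ X Y Z U)
    (ρ : V → V → ℝ) (hρ : ∀ X Y, ρ X Y = ∑ i, R (e i) X Y (e i)) :
    ∀ X Y, ρ X Y = (((n : ℝ) + 1) / 2 * a + b / 4) * m X Y
      + (((n : ℝ) + 1) / 2 * a + ((n : ℝ) + 3) / 4 * b + c) * h X Y := by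
  intro X Y
  set p : V → V := fun x => ((Submodule.orthogonalProjectionOnto D x : V)) with hpr
  have pmem : ∀ x : V, p x ∈ D := fun x => (Submodule.orthogonalProjectionOnto D x).2
  have padj : ∀ x y : V, ⟪p x, y⟫_ℝ = ⟪x, p y⟫_ℝ := fun x y =>
    Submodule.inner_starProjection_left_eq_right (K := D) x y
  have pself : ∀ x ∈ D, p x = x := fun x hx => Submodule.starProjection_eq_self_iff.mpr hx
  have pid : ∀ x : V, p (p x) = p x := fun x => pself _ (pmem x)
  have hDo : ∀ x ∈ Dᗮ, J x ∈ Dᗮ := by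
    intro x hx
    rw [Submodule.mem_orthogonal] at hx ⊢
    intro u hu
    rw [real_inner_comm, hskew, real_inner_comm]
    simpa using hx (J u) (hDinv u hu)
  have pJ : ∀ x : V, p (J x) = J (p x) := by
    intro x
    have hz : J x - J (p x) ∈ Dᗮ := by
      have hsub : x - p x ∈ Dᗮ := Submodule.sub_starProjection_mem_orthogonal (K := D) x
      have heq : J x - J (p x) = J (x - p x) := by rw [map_sub]
      rw [heq]; exact hDo _ hsub
    exact Submodule.eq_starProjection_of_mem_orthogonal' (hDinv _ (pmem x)) hz (by abel)
  have JJ : ∀ u v : V, ⟪J u, J v⟫_ℝ = ⟪u, v⟫_ℝ := by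
    intro u v; rw [hskew, hJ2]; simp
  have Jzero : ∀ u : V, ⟪J u, u⟫_ℝ = 0 := by
    intro u
    have h1 := hskew u u
    have h2 : ⟪u, J u⟫_ℝ = ⟪J u, u⟫_ℝ := real_inner_comm _ _
    linarith
  have Jpzero : ∀ u : V, ⟪J u, p u⟫_ℝ = 0 := by
    intro u
    have h1 := hskew u (p u)
    have h2 : ⟪u, J (p u)⟫_ℝ = ⟪u, p (J u)⟫_ℝ := by rw [pJ]
    have h3 : ⟪p u, J u⟫_ℝ = ⟪u, p (J u)⟫_ℝ := padj u (J u)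
    have h4 : ⟪p u, J u⟫_ℝ = ⟪J u, p u⟫_ℝ := real_inner_comm _ _
    linarith
  have hB : ∀ x y, h x y = ⟪x, p y⟫_ℝ := by
    intro x y
    rw [hh x y]
    have hxy : ⟪p x, p y⟫_ℝ = ⟪x, p (p y)⟫_ℝ := padj x (p y)
    rw [show ⟪(Submodule.orthogonalProjectionOnto D x : V), (Submodule.orthogonalProjectionOnto D y : V)⟫_ℝ
        = ⟪p x, p y⟫_ℝ from rfl, hxy, pid]
  have hm' : ∀ x y, m x y = ⟪x, y⟫_ℝ - ⟪x, p y⟫_ℝ := by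
    intro x y
    rw [hm x y, ← Submodule.starProjection_apply, ← Submodule.starProjection_apply,
      Submodule.starProjection_orthogonal_val, Submodule.starProjection_orthogonal_val,
      Submodule.starProjection_apply, Submodule.starProjection_apply]
    have h1 : ⟪p x, y⟫_ℝ = ⟪x, p y⟫_ℝ := padj x y
    have h2 : ⟪p x, p y⟫_ℝ = ⟪x, p y⟫_ℝ := by rw [padj x (p y), pid]
    simp only [inner_sub_left, inner_sub_right]
    rw [show ⟪x, (Submodule.orthogonalProjectionOnto D y : V)⟫_ℝ = ⟪x, p y⟫_ℝ from rfl,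
      show ⟪(Submodule.orthogonalProjectionOnto D x : V), y⟫_ℝ = ⟪p x, y⟫_ℝ from rfl,
      show ⟪(Submodule.orthogonalProjectionOnto D x : V), (Submodule.orthogonalProjectionOnto D y : V)⟫_ℝ
        = ⟪p x, p y⟫_ℝ from rfl, h1, h2]
    ring
  have P1 : ∀ v w : V, ∑ i, ⟪v, e i⟫_ℝ * ⟪e i, w⟫_ℝ = ⟪v, w⟫_ℝ := fun v w =>
    e.sum_inner_mul_inner v w
  have P2 : ∀ v w : V, ∑ i, ⟪e i, w⟫_ℝ * ⟪v, e i⟫_ℝ = ⟪v, w⟫_ℝ := by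
    intro v w
    calc ∑ i, ⟪e i, w⟫_ℝ * ⟪v, e i⟫_ℝ = ∑ i, ⟪v, e i⟫_ℝ * ⟪e i, w⟫_ℝ :=
          Finset.sum_congr rfl (fun i _ => mul_comm _ _)
      _ = ⟪v, w⟫_ℝ := P1 v w
  have pexpand : ∀ x : V, p x
      = ∑ j, ⟪((stdOrthonormalBasis ℝ D) j : V), x⟫_ℝ • ((stdOrthonormalBasis ℝ D) j : V) := by
    intro x
    have h0 := (stdOrthonormalBasis ℝ D).sum_repr' (Submodule.orthogonalProjectionOnto D x)
    have h1 := congrArg (Submodule.subtype D) h0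
    simp only [map_sum, map_smul, Submodule.subtype_apply] at h1
    rw [show p x = ((Submodule.orthogonalProjectionOnto D x : V)) from rfl, ← h1]
    refine Finset.sum_congr rfl (fun j _ => ?_)
    congr 1
    rw [Submodule.coe_inner]
    have hmem : ((stdOrthonormalBasis ℝ D) j : V) ∈ D := ((stdOrthonormalBasis ℝ D) j).2
    have hpa := padj (((stdOrthonormalBasis ℝ D) j : V)) x
    rw [pself _ hmem] at hpa
    exact hpa.symm
  have trace : ∑ i, ⟪p (e i), e i⟫_ℝ = 2 := by
    have hterm : ∀ i, ⟪p (e i), e i⟫_ℝ =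
        ∑ j, ⟪((stdOrthonormalBasis ℝ D) j : V), e i⟫_ℝ
          * ⟪e i, ((stdOrthonormalBasis ℝ D) j : V)⟫_ℝ := by
      intro i
      rw [real_inner_comm, pexpand, inner_sum]
      refine Finset.sum_congr rfl (fun j _ => ?_)
      rw [real_inner_smul_right]
    rw [Finset.sum_congr rfl (fun i _ => hterm i), Finset.sum_comm]
    have hj : ∀ j, ∑ i, ⟪((stdOrthonormalBasis ℝ D) j : V), e i⟫_ℝ
        * ⟪e i, ((stdOrthonormalBasis ℝ D) j : V)⟫_ℝ = 1 := by
      intro j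
      rw [P1]
      rw [← Submodule.coe_inner]
      have hnorm := (stdOrthonormalBasis ℝ D).orthonormal.1 j
      rw [real_inner_self_eq_norm_mul_norm, hnorm]; norm_num
    rw [Finset.sum_congr rfl (fun j _ => hj j)]
    simp [hDdim]
  have inner_e : ∀ i, ⟪e i, e i⟫_ℝ = 1 := fun i => by
    rw [real_inner_self_eq_norm_mul_norm, e.orthonormal.1 i]; norm_num
  -- pointwise identity
  have key : ∀ i, R (e i) X Y (e i) =
      ((a/4) * ⟪X, Y⟫_ℝ + (b/8) * ⟪X, p Y⟫_ℝ)
      + (b/8) * (⟪X, Y⟫_ℝ * ⟪p (e i), e i⟫_ℝ)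
      - (a/4) * (⟪e i, Y⟫_ℝ * ⟪X, e i⟫_ℝ)
      + (a/4) * (⟪e i, J Y⟫_ℝ * ⟪J X, e i⟫_ℝ)
      + (a/2) * (⟪e i, J X⟫_ℝ * ⟪J Y, e i⟫_ℝ)
      - (b/8) * (⟪e i, Y⟫_ℝ * ⟪p X, e i⟫_ℝ)
      - (b/8) * (⟪X, e i⟫_ℝ * ⟪e i, p Y⟫_ℝ)
      + (b/8) * (⟪e i, J Y⟫_ℝ * ⟪J (p X), e i⟫_ℝ)
      + (b/8) * (⟪J X, e i⟫_ℝ * ⟪e i, J (p Y)⟫_ℝ)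
      + (b/4) * (⟪e i, J X⟫_ℝ * ⟪J (p Y), e i⟫_ℝ)
      + (b/4) * (⟪J Y, e i⟫_ℝ * ⟪e i, J (p X)⟫_ℝ)
      + c * (⟪e i, J (p X)⟫_ℝ * ⟪J (p Y), e i⟫_ℝ) := by
    intro i
    have padjei : ∀ x : V, ⟪x, p (e i)⟫_ℝ = ⟪p x, e i⟫_ℝ := fun x => (padj x (e i)).symm
    simp only [hR, hPi, hΦ, hΨ, hω, hB]
    simp only [Jzero, Jpzero, inner_e i]
    simp only [hskew (e i)]
    simp only [padjei]
    simp only [pJ]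
    ring
  -- sum it up
  rw [hρ X Y, Finset.sum_congr rfl (fun i _ => key i)]
  have S1 : ∑ i, ⟪e i, Y⟫_ℝ * ⟪X, e i⟫_ℝ = ⟪X, Y⟫_ℝ := P2 X Y
  have S2 : ∑ i, ⟪e i, J Y⟫_ℝ * ⟪J X, e i⟫_ℝ = ⟪X, Y⟫_ℝ := by rw [P2 (J X) (J Y), JJ]
  have S3 : ∑ i, ⟪e i, J X⟫_ℝ * ⟪J Y, e i⟫_ℝ = ⟪X, Y⟫_ℝ := by
    rw [P2 (J Y) (J X), JJ, real_inner_comm]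
  have S4 : ∑ i, ⟪e i, Y⟫_ℝ * ⟪p X, e i⟫_ℝ = ⟪X, p Y⟫_ℝ := by rw [P2 (p X) Y, padj]
  have S5 : ∑ i, ⟪X, e i⟫_ℝ * ⟪e i, p Y⟫_ℝ = ⟪X, p Y⟫_ℝ := P1 X (p Y)
  have S6 : ∑ i, ⟪e i, J Y⟫_ℝ * ⟪J (p X), e i⟫_ℝ = ⟪X, p Y⟫_ℝ := by
    rw [P2 (J (p X)) (J Y), JJ, padj]
  have S7 : ∑ i, ⟪J X, e i⟫_ℝ * ⟪e i, J (p Y)⟫_ℝ = ⟪X, p Y⟫_ℝ := by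
    rw [P1 (J X) (J (p Y)), JJ]
  have S8 : ∑ i, ⟪e i, J X⟫_ℝ * ⟪J (p Y), e i⟫_ℝ = ⟪X, p Y⟫_ℝ := by
    rw [P2 (J (p Y)) (J X), JJ, real_inner_comm]
  have S9 : ∑ i, ⟪J Y, e i⟫_ℝ * ⟪e i, J (p X)⟫_ℝ = ⟪X, p Y⟫_ℝ := by
    rw [P1 (J Y) (J (p X)), JJ, real_inner_comm, padj]
  have S10 : ∑ i, ⟪e i, J (p X)⟫_ℝ * ⟪J (p Y), e i⟫_ℝ = ⟪X, p Y⟫_ℝ := by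
    rw [P2 (J (p Y)) (J (p X)), JJ, padj, pid, ← padj, real_inner_comm]
  simp only [Finset.sum_add_distrib, Finset.sum_sub_distrib, ← Finset.mul_sum,
    Finset.sum_const, Finset.card_univ, Fintype.card_fin, nsmul_eq_mul,
    S1, S2, S3, S4, S5, S6, S7, S8, S9, S10, trace]
  rw [hm' X Y, hB X Y]
  push_cast
  ring
end
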